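/- The factorization of Theorem 1.1 is unique: if (1 + p₁(z) J P₁) ⋯ (1 + p_N(z) J P_N) = (1 + q₁(z) J Q₁) ⋯ (1 + q_M(z) J Q_M), where all p_j, q_k are nonzero real polynomials vanishing at 0, all P_j, Q_k are rank-one orthogonal projections on ℝ², P_j ≠ P_{j+1} and Q_k ≠ Q_{k+1}, then N = M, P_j = Q_j, and p_j = q_j for all j. -/

import Mathlib

open Matrix Polynomial

noncomputable def Jmat : Matrix (Fin 2) (Fin 2) ℝ := !![0, -1; 1, 0]

def IsRankOneProjection (P : Matrix (Fin 2) (Fin 2) ℝ) : Prop :=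
  ∃ v : Fin 2 → ℝ, (v 0) ^ 2 + (v 1) ^ 2 = 1 ∧ P = vecMulVec v v

/-- The factor `1 + p(z) J P`, as a matrix with polynomial entries. -/
noncomputable def factor (p : ℝ[X]) (P : Matrix (Fin 2) (Fin 2) ℝ) :
    Matrix (Fin 2) (Fin 2) ℝ[X] :=
  1 + p • ((Jmat * P).map Polynomial.C)

namespace FactUniq

abbrev Mat := Matrix (Fin 2) (Fin 2) ℝ

lemma Jmv (v : Fin 2 → ℝ) : Jmat *ᵥ v = ![-(v 1), v 0] := by
  ext i
  fin_cases i <;> simp [Jmat, mulVec, dotProduct, Fin.sum_univ_two]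

lemma Jmat_mul_vmv (v : Fin 2 → ℝ) :
    Jmat * vecMulVec v v = vecMulVec (Jmat *ᵥ v) v := by
  ext i j
  fin_cases i <;> fin_cases j <;>
    simp [Jmat, vecMulVec_apply, mul_apply, Fin.sum_univ_two, Jmv, mulVec, dotProduct]

lemma vmv_mul_vmv {R : Type*} [CommRing R] (a b c d : Fin 2 → R) :
    vecMulVec a b * vecMulVec c d = (b ⬝ᵥ c) • vecMulVec a d := by
  ext i j
  simp [vecMulVec_apply, mul_apply, Fin.sum_univ_two, dotProduct, smul_eq_mul]
  ring

lemma one_le_natDegree {p : ℝ[X]} (hp : p ≠ 0) (h0 : p.eval 0 = 0) : 1 ≤ p.natDegree := by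
  by_contra h
  push_neg at h
  obtain ⟨a, ha⟩ := Polynomial.natDegree_eq_zero.mp (Nat.lt_one_iff.mp h)
  apply hp
  rw [← ha] at h0 ⊢
  simp at h0
  simp [h0]

lemma cross_eq_of_proj_eq {v w : Fin 2 → ℝ} (hv : (v 0)^2 + (v 1)^2 = 1)
    (hw : (w 0)^2 + (w 1)^2 = 1) (hc : v 0 * w 1 - v 1 * w 0 = 0) :
    vecMulVec v v = vecMulVec w w := by
  ext i j
  fin_cases i <;> fin_cases j <;> simp [vecMulVec_apply]
  · linear_combination -(v 0)^2 * hw + (w 0)^2 * hv + (v 0 * w 1 + v 1 * w 0) * hc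
  · linear_combination -(v 0 * v 1) * hw + w 0 * w 1 * hv - (v 0 * w 0 - v 1 * w 1) * hc
  · linear_combination -(v 0 * v 1) * hw + w 0 * w 1 * hv - (v 0 * w 0 - v 1 * w 1) * hc
  · linear_combination -(v 1)^2 * hw + (w 1)^2 * hv - (v 0 * w 1 + v 1 * w 0) * hc


lemma coeff_factor (p : ℝ[X]) (P : Mat) (k : ℕ) :
    (matPolyEquiv (factor p P)).coeff k
      = (if k = 0 then (1 : Mat) else 0) + p.coeff k • (Jmat * P) := by
  ext i j
  rw [matPolyEquiv_coeff_apply]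
  unfold _root_.factor
  simp only [Matrix.add_apply, Matrix.smul_apply, Matrix.map_apply, smul_eq_mul,
    coeff_add, coeff_mul_C, Matrix.one_apply]
  by_cases h : i = j <;> by_cases hk : k = 0 <;>
    simp [h, hk, Polynomial.coeff_one, Matrix.one_apply, Matrix.add_apply, Matrix.smul_apply]

lemma coeff_factor_high (p : ℝ[X]) (P : Mat) {k : ℕ} (hk : p.natDegree < k) :
    (matPolyEquiv (factor p P)).coeff k = 0 := by
  rw [coeff_factor, Polynomial.coeff_eq_zero_of_natDegree_lt hk]
  have : k ≠ 0 := by omega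
  simp [this]

lemma JP_sq {v : Fin 2 → ℝ} :
    (Jmat * vecMulVec v v) * (Jmat * vecMulVec v v) = 0 := by
  rw [Jmat_mul_vmv, vmv_mul_vmv]
  have : v ⬝ᵥ (Jmat *ᵥ v) = 0 := by
    simp only [Jmv, dotProduct, Fin.sum_univ_two, Matrix.cons_val_zero, Matrix.cons_val_one, Matrix.head_cons]
    ring
  rw [this, zero_smul]

lemma factor_mul_factor {P : Mat} (hP : IsRankOneProjection P) (a b : ℝ[X]) :
    factor a P * factor b P = factor (a + b) P := by
  obtain ⟨v, -, rfl⟩ := hP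
  have hsq : ((Jmat * vecMulVec v v).map (Polynomial.C (R := ℝ))) *
      ((Jmat * vecMulVec v v).map (Polynomial.C (R := ℝ))) = 0 := by
    rw [← Matrix.map_mul, JP_sq]
    ext i j; simp
  unfold _root_.factor
  simp only [mul_add, add_mul, one_mul, mul_one, Algebra.mul_smul_comm,
    Algebra.smul_mul_assoc, smul_smul, hsq, smul_zero, add_zero, add_smul]
  abel

lemma factor_zero (P : Mat) : factor 0 P = 1 := by
  unfold _root_.factor
  simp

lemma smul_vmv_ne_zero {c : ℝ} {v vl : Fin 2 → ℝ} (hc : c ≠ 0)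
    (hv : (v 0)^2 + (v 1)^2 = 1) (hvl : (vl 0)^2 + (vl 1)^2 = 1) :
    c • vecMulVec (Jmat *ᵥ v) vl ≠ 0 := by
  intro h
  have e : ∀ i j, c * ((Jmat *ᵥ v) i * vl j) = 0 := by
    intro i j
    have := congrFun (congrFun h i) j
    simpa only [Matrix.smul_apply, vecMulVec_apply, smul_eq_mul, Matrix.zero_apply] using this
  have e' : ∀ i j, (Jmat *ᵥ v) i * vl j = 0 := fun i j =>
    (mul_eq_zero.mp (e i j)).resolve_left hc
  have h00 := e' 0 0; have h01 := e' 0 1; have h10 := e' 1 0; have h11 := e' 1 1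
  simp only [Jmv] at h00 h01 h10 h11
  simp [Jmv, mul_eq_zero] at h00 h01 h10 h11
  have hvl' : vl 0 ≠ 0 ∨ vl 1 ≠ 0 := by
    by_contra hcon
    push_neg at hcon
    rw [hcon.1, hcon.2] at hvl
    norm_num at hvl
  have hv' : v 0 = 0 ∧ v 1 = 0 := by
    rcases hvl' with hne | hne
    · exact ⟨h10.resolve_right hne, h00.resolve_right hne⟩
    · exact ⟨h11.resolve_right hne, h01.resolve_right hne⟩
  rw [hv'.1, hv'.2] at hv
  norm_num at hv

lemma proj_eq_of_lead {c c' : ℝ} {v vl w wl : Fin 2 → ℝ} (hc : c ≠ 0)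
    (hv : (v 0)^2 + (v 1)^2 = 1) (hvl : (vl 0)^2 + (vl 1)^2 = 1)
    (hw : (w 0)^2 + (w 1)^2 = 1) (hwl : (wl 0)^2 + (wl 1)^2 = 1)
    (h : c • vecMulVec (Jmat *ᵥ v) vl = c' • vecMulVec (Jmat *ᵥ w) wl) :
    vecMulVec v v = vecMulVec w w := by
  have e : ∀ i j, c * ((Jmat *ᵥ v) i * vl j) = c' * ((Jmat *ᵥ w) i * wl j) := by
    intro i j
    have := congrFun (congrFun h i) j
    simpa only [Matrix.smul_apply, vecMulVec_apply, smul_eq_mul] using this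
  have h00 := e 0 0; have h01 := e 0 1; have h10 := e 1 0; have h11 := e 1 1
  simp only [Jmv, Matrix.cons_val_zero, Matrix.cons_val_one, Matrix.head_cons] at h00 h01 h10 h11
  -- squared relations
  have s0 : c^2 * (v 1)^2 = c'^2 * (w 1)^2 := by
    have a0 : c^2 * ((v 1)^2 * (vl 0)^2) = c'^2 * ((w 1)^2 * (wl 0)^2) := by
      linear_combination (c * (-v 1 * vl 0) + c' * (-w 1 * wl 0)) * h00
    have a1 : c^2 * ((v 1)^2 * (vl 1)^2) = c'^2 * ((w 1)^2 * (wl 1)^2) := by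
      linear_combination (c * (-v 1 * vl 1) + c' * (-w 1 * wl 1)) * h01
    linear_combination a0 + a1 - c^2 * (v 1)^2 * hvl + c'^2 * (w 1)^2 * hwl
  have s1 : c^2 * (v 0)^2 = c'^2 * (w 0)^2 := by
    have a0 : c^2 * ((v 0)^2 * (vl 0)^2) = c'^2 * ((w 0)^2 * (wl 0)^2) := by
      linear_combination (c * (v 0 * vl 0) + c' * (w 0 * wl 0)) * h10
    have a1 : c^2 * ((v 0)^2 * (vl 1)^2) = c'^2 * ((w 0)^2 * (wl 1)^2) := by
      linear_combination (c * (v 0 * vl 1) + c' * (w 0 * wl 1)) * h11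
    linear_combination a0 + a1 - c^2 * (v 0)^2 * hvl + c'^2 * (w 0)^2 * hwl
  have scr : c^2 * (v 0 * v 1) = c'^2 * (w 0 * w 1) := by
    have a0 : c^2 * ((v 0 * v 1) * (vl 0)^2) = c'^2 * ((w 0 * w 1) * (wl 0)^2) := by
      linear_combination (-(c * (v 0 * vl 0))) * h00 - (c' * (-w 1 * wl 0)) * h10
    have a1 : c^2 * ((v 0 * v 1) * (vl 1)^2) = c'^2 * ((w 0 * w 1) * (wl 1)^2) := by
      linear_combination (-(c * (v 0 * vl 1))) * h01 - (c' * (-w 1 * wl 1)) * h11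
    linear_combination a0 + a1 - c^2 * (v 0 * v 1) * hvl + c'^2 * (w 0 * w 1) * hwl
  have csq : c^2 = c'^2 := by linear_combination s0 + s1 - c^2 * hv + c'^2 * hw
  have hc2 : c^2 ≠ 0 := pow_ne_zero _ hc
  ext i j
  fin_cases i <;> fin_cases j <;> simp [vecMulVec_apply] <;>
    apply mul_left_cancel₀ hc2
  · linear_combination s1 - (w 0)^2 * csq
  · linear_combination scr - (w 0 * w 1) * csq
  · linear_combination scr - (w 0 * w 1) * csq
  · linear_combination s0 - (w 1)^2 * csq


noncomputable def prodF (L : List (ℝ[X] × Mat)) : Matrix (Fin 2) (Fin 2) ℝ[X] :=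
  (L.map fun x => _root_.factor x.1 x.2).prod

def degS (L : List (ℝ[X] × Mat)) : ℕ := (L.map fun x => x.1.natDegree).sum

def ValidP (x : ℝ[X] × Mat) : Prop := x.1 ≠ 0 ∧ x.1.eval 0 = 0 ∧ IsRankOneProjection x.2

lemma prodF_cons (x : ℝ[X] × Mat) (t : List (ℝ[X] × Mat)) :
    prodF (x :: t) = _root_.factor x.1 x.2 * prodF t := by
  simp [prodF]

lemma dot_ne {v w : Fin 2 → ℝ} (hv : (v 0)^2 + (v 1)^2 = 1) (hw : (w 0)^2 + (w 1)^2 = 1)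
    (hne : vecMulVec v v ≠ vecMulVec w w) : v ⬝ᵥ (Jmat *ᵥ w) ≠ 0 := by
  intro h
  apply hne
  apply cross_eq_of_proj_eq hv hw
  simp only [Jmv, dotProduct, Fin.sum_univ_two, Matrix.cons_val_zero, Matrix.cons_val_one, Matrix.head_cons] at h
  linarith

lemma key : ∀ (t : List (ℝ[X] × Mat)) (x : ℝ[X] × Mat),
    (∀ y ∈ x :: t, ValidP y) → (x :: t).Chain' (fun a b => a.2 ≠ b.2) →
    ∃ (c : ℝ) (v vl : Fin 2 → ℝ), c ≠ 0 ∧ ((v 0)^2 + (v 1)^2 = 1) ∧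
      ((vl 0)^2 + (vl 1)^2 = 1) ∧ x.2 = vecMulVec v v ∧
      (∀ k, degS (x :: t) < k → (matPolyEquiv (prodF (x :: t))).coeff k = 0) ∧
      (matPolyEquiv (prodF (x :: t))).coeff (degS (x :: t)) = c • vecMulVec (Jmat *ᵥ v) vl := by
  intro t
  induction t with
  | nil =>
    intro x hvalid _
    obtain ⟨hne, h0, v, hv, hPx⟩ := hvalid x (by simp)
    have hd1 : 1 ≤ x.1.natDegree := one_le_natDegree hne h0
    have hDS : degS [x] = x.1.natDegree := by simp [degS]
    have hprod : prodF [x] = _root_.factor x.1 x.2 := by simp [prodF]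
    refine ⟨x.1.leadingCoeff, v, v, leadingCoeff_ne_zero.mpr hne, hv, hv, hPx, ?_, ?_⟩
    · intro k hk
      rw [hprod]
      exact coeff_factor_high _ _ (by omega : x.1.natDegree < k)
    · rw [hprod, hDS, coeff_factor, if_neg (by omega : x.1.natDegree ≠ 0), zero_add,
        hPx, Jmat_mul_vmv]
      rfl
  | cons y t' IH =>
    intro x hvalid hchain
    obtain ⟨hne, h0, v, hv, hPx⟩ := hvalid x (by simp)
    have hd1 : 1 ≤ x.1.natDegree := one_le_natDegree hne h0
    obtain ⟨c', w, wl, hc', hw, hwl, hPy, hhigh, htop⟩ :=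
      IH y (fun z hz => hvalid z (List.mem_cons_of_mem _ hz)) hchain.tail
    have hxy : x.2 ≠ y.2 := (List.isChain_cons_cons.mp hchain).1
    have hcross : v ⬝ᵥ (Jmat *ᵥ w) ≠ 0 := by
      apply dot_ne hv hw
      rw [← hPx, ← hPy]; exact hxy
    have hDS : degS (x :: y :: t') = x.1.natDegree + degS (y :: t') := by simp [degS]
    have hsplit : matPolyEquiv (prodF (x :: y :: t'))
        = matPolyEquiv (_root_.factor x.1 x.2) * matPolyEquiv (prodF (y :: t')) := by
      rw [prodF_cons, _root_.map_mul]
    refine ⟨x.1.leadingCoeff * c' * (v ⬝ᵥ (Jmat *ᵥ w)), v, wl,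
      mul_ne_zero (mul_ne_zero (leadingCoeff_ne_zero.mpr hne) hc') hcross, hv, hwl, hPx, ?_, ?_⟩
    · intro k hk
      rw [hsplit, coeff_mul]
      apply Finset.sum_eq_zero
      intro ij hij
      rw [Finset.HasAntidiagonal.mem_antidiagonal] at hij
      rw [hDS] at hk
      by_cases h1 : x.1.natDegree < ij.1
      · rw [coeff_factor_high _ _ h1, zero_mul]
      · rw [hhigh ij.2 (by omega), mul_zero]
    · rw [hsplit, hDS, coeff_mul,
        Finset.sum_eq_single (x.1.natDegree, degS (y :: t'))]
      · rw [coeff_factor, if_neg (by omega : x.1.natDegree ≠ 0), zero_add, hPx,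
          Jmat_mul_vmv, htop, Matrix.smul_mul, Matrix.mul_smul, smul_smul,
          vmv_mul_vmv, smul_smul]
        rfl
      · intro ij hij hne'
        rw [Finset.HasAntidiagonal.mem_antidiagonal] at hij
        by_cases h1 : x.1.natDegree < ij.1
        · rw [coeff_factor_high _ _ h1, zero_mul]
        · have h2 : ij.1 < x.1.natDegree ∨ ij.1 = x.1.natDegree := by omega
          rcases h2 with h2 | h2
          · rw [hhigh ij.2 (by omega), mul_zero]
          · exfalso; apply hne'
            have : ij.2 = degS (y :: t') := by omega
            exact Prod.ext h2 this
      · intro habs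
        simp [Finset.mem_antidiagonal] at habs


lemma prod_ne_one (x : ℝ[X] × Mat) (t : List (ℝ[X] × Mat))
    (hvalid : ∀ y ∈ x :: t, ValidP y)
    (hchain : (x :: t).Chain' (fun a b => a.2 ≠ b.2)) :
    prodF (x :: t) ≠ 1 := by
  obtain ⟨c, v, vl, hc, hv, hvl, hPx, hhigh, htop⟩ := key t x hvalid hchain
  intro h1
  obtain ⟨hne, h0, -⟩ := hvalid x (by simp)
  have hd1 : 1 ≤ degS (x :: t) := by
    have := one_le_natDegree hne h0
    simp [degS]
    omega
  rw [h1] at htop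
  rw [_root_.map_one] at htop
  rw [Polynomial.coeff_one, if_neg (by omega : degS (x :: t) ≠ 0)] at htop
  exact smul_vmv_ne_zero hc hv hvl htop.symm

lemma list_eq : ∀ (L L' : List (ℝ[X] × Mat)), (∀ y ∈ L, ValidP y) → (∀ y ∈ L', ValidP y) →
    L.Chain' (fun a b => a.2 ≠ b.2) → L'.Chain' (fun a b => a.2 ≠ b.2) →
    prodF L = prodF L' → L = L' := by
  intro L
  induction L with
  | nil =>
    intro L' _ hvq _ hcq heq
    cases L' with
    | nil => rfl
    | cons b t' =>
      exfalso
      apply prod_ne_one b t' hvq hcq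
      rw [← heq]
      simp [prodF]
  | cons a t IH =>
    intro L' hvp hvq hcp hcq heq
    cases L' with
    | nil =>
      exfalso
      apply prod_ne_one a t hvp hcp
      rw [heq]
      simp [prodF]
    | cons b t' =>
      obtain ⟨c, v, vl, hc, hv, hvl, hPa, hhighL, htopL⟩ := key t a hvp hcp
      obtain ⟨c', w, wl, hc', hw, hwl, hPb, hhighR, htopR⟩ := key t' b hvq hcq
      -- degrees agree
      have hDD : degS (a :: t) = degS (b :: t') := by
        rcases Nat.lt_trichotomy (degS (a :: t)) (degS (b :: t')) with h | h | h
        · exfalso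
          have h1 := hhighL _ h
          rw [heq] at h1
          rw [htopR] at h1
          exact smul_vmv_ne_zero hc' hw hwl h1
        · exact h
        · exfalso
          have h1 := hhighR _ h
          rw [← heq] at h1
          rw [htopL] at h1
          exact smul_vmv_ne_zero hc hv hvl h1
      -- head projections agree
      have hlead : c • vecMulVec (Jmat *ᵥ v) vl = c' • vecMulVec (Jmat *ᵥ w) wl := by
        rw [← htopL, ← htopR, ← hDD, heq]
      have hproj : a.2 = b.2 := by
        rw [hPa, hPb]
        exact proj_eq_of_lead hc hv hvl hw hwl hlead
      -- strip the first factor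
      obtain ⟨ha1, ha0, hPA⟩ := hvp a (by simp)
      obtain ⟨hb1, hb0, -⟩ := hvq b (by simp)
      have hstrip : prodF t = _root_.factor (b.1 - a.1) a.2 * prodF t' := by
        have h2 : _root_.factor (-a.1) a.2 * prodF (a :: t)
            = _root_.factor (-a.1) a.2 * prodF (b :: t') := by rw [heq]
        rw [prodF_cons, prodF_cons, ← mul_assoc, ← mul_assoc, ← hproj,
          factor_mul_factor hPA, factor_mul_factor hPA] at h2
        rw [neg_add_cancel, factor_zero, one_mul] at h2
        rw [h2]
        ring_nf
      by_cases hr : b.1 - a.1 = 0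
      · have hab1 : a.1 = b.1 := (sub_eq_zero.mp hr).symm
        rw [hr, factor_zero, one_mul] at hstrip
        have ht : t = t' := IH t' (fun z hz => hvp z (List.mem_cons_of_mem _ hz))
          (fun z hz => hvq z (List.mem_cons_of_mem _ hz)) hcp.tail hcq.tail hstrip
        rw [ht, Prod.ext hab1 hproj]
      · exfalso
        have hvalid' : ∀ z ∈ (b.1 - a.1, a.2) :: t', ValidP z := by
          intro z hz
          rcases List.mem_cons.mp hz with rfl | hz
          · exact ⟨hr, by simp [ha0, hb0], hPA⟩
          · exact hvq z (List.mem_cons_of_mem _ hz)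
        have hchain' : ((b.1 - a.1, a.2) :: t').Chain' (fun a b => a.2 ≠ b.2) := by
          dsimp only [List.Chain']; rw [List.isChain_cons]
          refine ⟨?_, hcq.tail⟩
          intro z hz
          have := (List.isChain_cons.mp hcq).1 z hz
          rw [hproj]
          exact this
        have ht : t = (b.1 - a.1, a.2) :: t' := IH _
          (fun z hz => hvp z (List.mem_cons_of_mem _ hz)) hvalid' hcp.tail hchain'
          (by rw [hstrip, prodF_cons])
        have := (List.isChain_cons.mp hcp).1
        rw [ht] at this
        exact (this _ rfl) rfl

end FactUniq

theorem factorization_unique (N M : ℕ)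
    (p : Fin N → ℝ[X]) (P : Fin N → Matrix (Fin 2) (Fin 2) ℝ)
    (q : Fin M → ℝ[X]) (Q : Fin M → Matrix (Fin 2) (Fin 2) ℝ)
    (hp : ∀ j, p j ≠ 0 ∧ (p j).eval 0 = 0 ∧ IsRankOneProjection (P j))
    (hq : ∀ k, q k ≠ 0 ∧ (q k).eval 0 = 0 ∧ IsRankOneProjection (Q k))
    (hPadj : ∀ (i : ℕ) (hi : i + 1 < N), P ⟨i, Nat.lt_of_succ_lt hi⟩ ≠ P ⟨i + 1, hi⟩)
    (hQadj : ∀ (i : ℕ) (hi : i + 1 < M), Q ⟨i, Nat.lt_of_succ_lt hi⟩ ≠ Q ⟨i + 1, hi⟩)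
    (heq : (List.ofFn (fun j : Fin N => factor (p j) (P j))).prod =
      (List.ofFn (fun k : Fin M => factor (q k) (Q k))).prod) :
    N = M ∧ ∀ (i : ℕ) (hiN : i < N) (hiM : i < M),
      p ⟨i, hiN⟩ = q ⟨i, hiM⟩ ∧ P ⟨i, hiN⟩ = Q ⟨i, hiM⟩ := by
  set Lp : List (ℝ[X] × FactUniq.Mat) := List.ofFn (fun j : Fin N => (p j, P j)) with hLp
  set Lq : List (ℝ[X] × FactUniq.Mat) := List.ofFn (fun k : Fin M => (q k, Q k)) with hLq
  have hvp : ∀ y ∈ Lp, FactUniq.ValidP y := by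
    intro y hy
    rw [hLp, List.mem_ofFn] at hy
    obtain ⟨j, rfl⟩ := hy
    exact ⟨(hp j).1, (hp j).2.1, (hp j).2.2⟩
  have hvq : ∀ y ∈ Lq, FactUniq.ValidP y := by
    intro y hy
    rw [hLq, List.mem_ofFn] at hy
    obtain ⟨k, rfl⟩ := hy
    exact ⟨(hq k).1, (hq k).2.1, (hq k).2.2⟩
  have hcp : Lp.Chain' (fun a b => a.2 ≠ b.2) := by
    rw [hLp]; dsimp only [List.Chain']; rw [List.isChain_iff_getElem]
    intro i hi
    rw [List.length_ofFn] at hi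
    rw [List.getElem_ofFn, List.getElem_ofFn]
    simpa using hPadj i (by omega)
  have hcq : Lq.Chain' (fun a b => a.2 ≠ b.2) := by
    rw [hLq]; dsimp only [List.Chain']; rw [List.isChain_iff_getElem]
    intro i hi
    rw [List.length_ofFn] at hi
    rw [List.getElem_ofFn, List.getElem_ofFn]
    simpa using hQadj i (by omega)
  have hprod : FactUniq.prodF Lp = FactUniq.prodF Lq := by
    rw [hLp, hLq]
    unfold FactUniq.prodF
    rw [List.map_ofFn, List.map_ofFn]
    exact heq
  have hLL := FactUniq.list_eq Lp Lq hvp hvq hcp hcq hprod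
  have hlen : N = M := by
    have := congrArg List.length hLL
    simpa [hLp, hLq] using this
  subst hlen
  refine ⟨rfl, ?_⟩
  rw [hLp, hLq] at hLL
  have hfun := List.ofFn_injective hLL
  intro i hiN hiM
  have h1 := congrFun hfun ⟨i, hiN⟩
  exact ⟨congrArg Prod.fst h1, congrArg Prod.snd h1⟩
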